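/- Let B > 0 and let η₂,...,η₈ be complex numbers. If |η₂η₃η₄η₅η₆η₇η₈| ≤ B and |η₃η₄η₅η₆η₇(η₄η₅³η₆²η₇ + η₂η₈)| ≤ B, then |η₃η₄²η₅⁴η₆³η₇²| ≤ 4B. -/

import Mathlib

theorem norm_sub_sq_le_four_mul {E : Type*} [SeminormedAddGroup E] {x y : E} {B : ℝ}
    (hx : ‖x‖ ^ 2 ≤ B) (hy : ‖y‖ ^ 2 ≤ B) : ‖x - y‖ ^ 2 ≤ 4 * B :=
  calc ‖x - y‖ ^ 2 ≤ (‖x‖ + ‖y‖) ^ 2 := by gcongr; exact norm_sub_le x y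
    _ ≤ 2 * (‖x‖ ^ 2 + ‖y‖ ^ 2) := add_sq_le
    _ ≤ 4 * B := by linarith

theorem stmt0_general (B : ℝ) (η₂ η₃ η₄ η₅ η₆ η₇ η₈ : ℂ)
    (h1 : ‖η₂ * η₃ * η₄ * η₅ * η₆ * η₇ * η₈‖^2 ≤ B)
    (h2 : ‖η₃ * η₄ * η₅ * η₆ * η₇ * (η₄ * η₅^3 * η₆^2 * η₇ + η₂ * η₈)‖^2 ≤ B) :
    ‖η₃ * η₄^2 * η₅^4 * η₆^3 * η₇^2‖^2 ≤ 4 * B := by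
  have hdiff : η₃ * η₄^2 * η₅^4 * η₆^3 * η₇^2 =
      η₃ * η₄ * η₅ * η₆ * η₇ * (η₄ * η₅^3 * η₆^2 * η₇ + η₂ * η₈) -
        η₂ * η₃ * η₄ * η₅ * η₆ * η₇ * η₈ := by
    ring
  rw [hdiff]
  exact norm_sub_sq_le_four_mul h2 h1

theorem stmt0 (B : ℝ) (hB : 0 < B) (η₂ η₃ η₄ η₅ η₆ η₇ η₈ : ℂ)
    (h1 : ‖η₂ * η₃ * η₄ * η₅ * η₆ * η₇ * η₈‖^2 ≤ B)
    (h2 : ‖η₃ * η₄ * η₅ * η₆ * η₇ * (η₄ * η₅^3 * η₆^2 * η₇ + η₂ * η₈)‖^2 ≤ B) :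
    ‖η₃ * η₄^2 * η₅^4 * η₆^3 * η₇^2‖^2 ≤ 4 * B :=
  stmt0_general B η₂ η₃ η₄ η₅ η₆ η₇ η₈ h1 h2
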